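/- For 0 < λ < ρ < σ < 2π and θ > 0, ∫_λ^ρ ∫₀^σ Φ_σ(θ, φ, φ₀) dφ₀ dφ = (2(ρ - λ)/θ) sinh(πθ), where Φ_σ is as in the wedge Green's function: Φ_σ(θ,φ,φ₀) := cosh((π - |φ₀ - φ|)θ) + (sinh(πθ)/sinh(σθ)) cosh((φ + φ₀ - σ)θ) + (sinh((π-σ)θ)/sinh(σθ)) cosh((φ - φ₀)θ). -/

import Mathlib

/-!
For every fixed `φ ∈ [0, σ]` the inner integral is already `2 sinh(πθ)/θ`. The kernel
`cosh((π - |φ₀ - φ|)θ)` integrates to `(2 sinh(πθ) - sinh((π - φ)θ) - sinh((π - σ + φ)θ))/θ`,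
and both correction terms integrate to `(sinh(φθ) + sinh((σ - φ)θ))/θ`; by a sum-to-product
identity their coefficients turn this into exactly the missing
`(sinh((π - φ)θ) + sinh((π - σ + φ)θ))/θ`.
The outer integral is then the integral of a constant.
-/

open Real MeasureTheory

noncomputable def Phi (σ θ φ φ₀ : ℝ) : ℝ :=
  Real.cosh ((π - |φ₀ - φ|) * θ) +
    Real.sinh (π * θ) / Real.sinh (σ * θ) * Real.cosh ((φ + φ₀ - σ) * θ) +
    Real.sinh ((π - σ) * θ) / Real.sinh (σ * θ) * Real.cosh ((φ - φ₀) * θ)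

theorem integral_cosh (a b : ℝ) : ∫ x in a..b, cosh x = sinh b - sinh a :=
  intervalIntegral.integral_deriv_eq_sub' sinh Real.deriv_sinh
    (fun x _ => Real.differentiable_sinh x) Real.continuous_cosh.continuousOn

theorem integral_cosh_sub_mul {θ : ℝ} (hθ : θ ≠ 0) (a b c : ℝ) :
    ∫ x in a..b, cosh ((x - c) * θ) = (sinh ((b - c) * θ) - sinh ((a - c) * θ)) / θ := by
  rw [intervalIntegral.integral_comp_sub_right (fun x => cosh (x * θ)),
    intervalIntegral.integral_comp_mul_right _ hθ, integral_cosh, smul_eq_mul, inv_mul_eq_div]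

theorem integral_cosh_sub_abs_sub_mul {θ a b φ : ℝ} (hθ : θ ≠ 0) (haφ : a ≤ φ) (hφb : φ ≤ b)
    (p : ℝ) :
    ∫ x in a..b, cosh ((p - |x - φ|) * θ)
      = (2 * sinh (p * θ) - sinh ((p - (φ - a)) * θ) - sinh ((p - (b - φ)) * θ)) / θ := by
  have hint : ∀ c d : ℝ, IntervalIntegrable (fun x => cosh ((p - |x - φ|) * θ)) volume c d :=
    fun c d => (by fun_prop : Continuous fun x => cosh ((p - |x - φ|) * θ)).intervalIntegrable c d
  have left : ∫ x in a..φ, cosh ((p - |x - φ|) * θ) = ∫ x in a..φ, cosh ((x - (φ - p)) * θ) := by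
    refine intervalIntegral.integral_congr fun x hx => ?_
    rw [Set.uIcc_of_le haφ] at hx
    simp only [abs_of_nonpos (sub_nonpos.2 hx.2)]
    ring_nf
  have right : ∫ x in φ..b, cosh ((p - |x - φ|) * θ) = ∫ x in φ..b, cosh ((x - (φ + p)) * θ) := by
    refine intervalIntegral.integral_congr fun x hx => ?_
    rw [Set.uIcc_of_le hφb] at hx
    simp only [abs_of_nonneg (sub_nonneg.2 hx.1), ← cosh_neg ((x - (φ + p)) * θ)]
    ring_nf
  rw [← intervalIntegral.integral_add_adjacent_intervals (hint a φ) (hint φ b), left, right,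
    integral_cosh_sub_mul hθ, integral_cosh_sub_mul hθ,
    show (b - (φ + p)) * θ = -((p - (b - φ)) * θ) by ring,
    show (φ - (φ + p)) * θ = -(p * θ) by ring, sinh_neg, sinh_neg]
  ring_nf

/- Both sides equal `4 sinh(s/2) cosh(s/2) sinh(a - s/2) cosh(u - s/2)`. -/
theorem sinh_mul_sinh_sub_add_sinh_sub_sub (a s u : ℝ) :
    sinh s * (sinh (a - u) + sinh (a - (s - u)))
      = (sinh a + sinh (a - s)) * (sinh u + sinh (s - u)) := by
  simp only [sinh_sub, cosh_sub]
  linear_combination (sinh a * sinh u) * cosh_sq_sub_sinh_sq s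

theorem integral_Phi_of_mem_Icc {σ θ φ : ℝ} (hθ : θ ≠ 0) (hσθ : sinh (σ * θ) ≠ 0)
    (hφ : φ ∈ Set.Icc 0 σ) :
    ∫ φ₀ in (0:ℝ)..σ, Phi σ θ φ φ₀ = 2 / θ * sinh (π * θ) := by
  have hA := integral_cosh_sub_abs_sub_mul hθ hφ.1 hφ.2 π
  rw [sub_zero] at hA
  have hB : ∫ x in (0:ℝ)..σ, cosh ((φ + x - σ) * θ) = (sinh (φ * θ) + sinh ((σ - φ) * θ)) / θ := by
    simp_rw [show ∀ x, φ + x - σ = x - (σ - φ) from fun x => by ring]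
    rw [integral_cosh_sub_mul hθ, show (0 - (σ - φ)) * θ = -((σ - φ) * θ) by ring, sinh_neg]
    ring_nf
  have hC : ∫ x in (0:ℝ)..σ, cosh ((φ - x) * θ) = (sinh (φ * θ) + sinh ((σ - φ) * θ)) / θ := by
    simp_rw [← cosh_neg ((φ - _) * θ), show ∀ x, -((φ - x) * θ) = (x - φ) * θ from fun x => by ring]
    rw [integral_cosh_sub_mul hθ, show (0 - φ) * θ = -(φ * θ) by ring, sinh_neg]
    ring
  have hint : ∀ f : ℝ → ℝ, Continuous f → IntervalIntegrable f volume 0 σ :=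
    fun f hf => hf.intervalIntegrable 0 σ
  unfold Phi
  rw [intervalIntegral.integral_add (hint _ (by fun_prop)) (hint _ (by fun_prop)),
    intervalIntegral.integral_add (hint _ (by fun_prop)) (hint _ (by fun_prop)),
    intervalIntegral.integral_const_mul, intervalIntegral.integral_const_mul, hA, hB, hC]
  have key : (sinh (π * θ) / sinh (σ * θ) + sinh ((π - σ) * θ) / sinh (σ * θ))
      * (sinh (φ * θ) + sinh ((σ - φ) * θ)) = sinh ((π - φ) * θ) + sinh ((π - (σ - φ)) * θ) := by
    rw [← add_div, div_mul_eq_mul_div, div_eq_iff hσθ]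
    simp only [sub_mul]
    linear_combination -sinh_mul_sinh_sub_add_sinh_sub_sub (π * θ) (σ * θ) (φ * θ)
  linear_combination key / θ

theorem stmt15_general (σ ρ lam θ : ℝ) (hlam : 0 < lam) (hlr : lam < ρ) (hrs : ρ < σ)
    (hθ : 0 < θ) :
    ∫ φ in lam..ρ, ∫ φ₀ in (0:ℝ)..σ, Phi σ θ φ φ₀
      = (2 * (ρ - lam) / θ) * Real.sinh (π * θ) := by
  have hσθ : sinh (σ * θ) ≠ 0 := (sinh_pos_iff.2 (mul_pos (by linarith) hθ)).ne'
  have hinner : Set.EqOn (fun φ => ∫ φ₀ in (0:ℝ)..σ, Phi σ θ φ φ₀)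
      (fun _ => 2 / θ * sinh (π * θ)) (Set.uIcc lam ρ) := by
    intro φ hφ
    rw [Set.uIcc_of_le hlr.le] at hφ
    exact integral_Phi_of_mem_Icc hθ.ne' hσθ ⟨hlam.le.trans hφ.1, hφ.2.trans hrs.le⟩
  rw [intervalIntegral.integral_congr hinner, intervalIntegral.integral_const, smul_eq_mul]
  ring

theorem stmt15 (σ ρ lam θ : ℝ) (hlam : 0 < lam) (hlr : lam < ρ) (hrs : ρ < σ)
    (hσ : σ < 2 * π) (hθ : 0 < θ) :
    ∫ φ in lam..ρ, ∫ φ₀ in (0:ℝ)..σ, Phi σ θ φ φ₀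
      = (2 * (ρ - lam) / θ) * Real.sinh (π * θ) :=
  stmt15_general σ ρ lam θ hlam hlr hrs hθ
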